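/- Let (α, N, B, κ_g, τ_g) be a Frenet apparatus of a timelike unit speed non-geodesic curve in S³₁, and suppose there exist constants μ₁, μ₂ ∈ ℝ with μ₂² − μ₁² < 1 such that τ_g(s) = (μ₁·sinh(s) + μ₂·cosh(s))·κ_g(s) for all s ∈ ℝ. Then there exists a point p ∈ S³₁ (i.e., ⟨p,p⟩ = 1) such that ⟨p, N(s)⟩ = 0 for all s; that is, α is a timelike rectifying curve with respect to p. -/

import Mathlib

open Real

/-- The Minkowski scalar product on `ℝ⁴₁`:
`⟨x,y⟩ = -x₁y₁ + x₂y₂ + x₃y₃ + x₄y₄`. -/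
noncomputable def mdot (x y : Fin 4 → ℝ) : ℝ :=
  -(x 0 * y 0) + x 1 * y 1 + x 2 * y 2 + x 3 * y 3

/-!
With `f = μ₁ sinh + μ₂ cosh`, so that `f' = μ₁ cosh + μ₂ sinh` and `f'' = f`, the curve
`P = -f' α + f T + B` has derivative `(f κ_g - τ_g) N = 0`, hence is a constant vector. It is
orthogonal to `N`, and `⟨P, P⟩ = f'² - f² + 1 = 1 + μ₁² - μ₂² > 0`, so `P / √⟨P, P⟩` lies
in `S³₁`.
-/

lemma mdot_comm (x y : Fin 4 → ℝ) : mdot x y = mdot y x := by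
  simp only [mdot]; ring

lemma mdot_smul_left (c : ℝ) (x y : Fin 4 → ℝ) : mdot (c • x) y = c * mdot x y := by
  simp only [mdot, Pi.smul_apply, smul_eq_mul]; ring

lemma mdot_smul_smul (c : ℝ) (x y : Fin 4 → ℝ) : mdot (c • x) (c • y) = c ^ 2 * mdot x y := by
  simp only [mdot, Pi.smul_apply, smul_eq_mul]; ring

lemma mdot_linearCombination_left (a b : ℝ) (x y z w : Fin 4 → ℝ) :
    mdot (a • x + b • y + z) w = a * mdot x w + b * mdot y w + mdot z w := by
  simp only [mdot, Pi.add_apply, Pi.smul_apply, smul_eq_mul]; ring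

lemma mdot_linearCombination_self (a b : ℝ) (x y z : Fin 4 → ℝ) :
    mdot (a • x + b • y + z) (a • x + b • y + z) =
      a ^ 2 * mdot x x + b ^ 2 * mdot y y + mdot z z
        + 2 * a * b * mdot x y + 2 * a * mdot x z + 2 * b * mdot y z := by
  simp only [mdot, Pi.add_apply, Pi.smul_apply, smul_eq_mul]; ring

noncomputable def rectifyingAxis (μ₁ μ₂ : ℝ) (α B : ℝ → Fin 4 → ℝ) (s : ℝ) : Fin 4 → ℝ :=
  (-(μ₁ * cosh s + μ₂ * sinh s)) • α s + (μ₁ * sinh s + μ₂ * cosh s) • deriv α s + B s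

section RectifyingAxis

variable {α N B : ℝ → Fin 4 → ℝ} {κg τg : ℝ → ℝ} {μ₁ μ₂ : ℝ}

lemma hasDerivAt_rectifyingAxis (s : ℝ)
    (hα : DifferentiableAt ℝ α s) (hT : DifferentiableAt ℝ (deriv α) s)
    (hB : DifferentiableAt ℝ B s)
    (hF1 : deriv (deriv α) s = α s + κg s • N s)
    (hF3 : deriv B s = -τg s • N s)
    (hratio : τg s = (μ₁ * sinh s + μ₂ * cosh s) * κg s) :
    HasDerivAt (rectifyingAxis μ₁ μ₂ α B) 0 s := by
  have hcoeffα : HasDerivAt (fun s => -(μ₁ * cosh s + μ₂ * sinh s))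
      (-(μ₁ * sinh s + μ₂ * cosh s)) s :=
    (((hasDerivAt_cosh s).const_mul μ₁).add ((hasDerivAt_sinh s).const_mul μ₂)).neg
  have hcoeffT : HasDerivAt (fun s => μ₁ * sinh s + μ₂ * cosh s)
      (μ₁ * cosh s + μ₂ * sinh s) s :=
    ((hasDerivAt_sinh s).const_mul μ₁).add ((hasDerivAt_cosh s).const_mul μ₂)
  have hT' : HasDerivAt (deriv α) (α s + κg s • N s) s := hF1 ▸ hT.hasDerivAt
  have hB' : HasDerivAt B (-τg s • N s) s := hF3 ▸ hB.hasDerivAt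
  refine (((hcoeffα.smul hα.hasDerivAt).add (hcoeffT.smul hT')).add hB').congr_deriv ?_
  rw [hratio]
  module

lemma rectifyingAxis_eq_rectifyingAxis_zero
    (hα : Differentiable ℝ α) (hT : Differentiable ℝ (deriv α)) (hB : Differentiable ℝ B)
    (hF1 : ∀ s, deriv (deriv α) s = α s + κg s • N s)
    (hF3 : ∀ s, deriv B s = -τg s • N s)
    (hratio : ∀ s, τg s = (μ₁ * sinh s + μ₂ * cosh s) * κg s) (s : ℝ) :
    rectifyingAxis μ₁ μ₂ α B s = rectifyingAxis μ₁ μ₂ α B 0 := by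
  have hP : ∀ s, HasDerivAt (rectifyingAxis μ₁ μ₂ α B) 0 s := fun s =>
    hasDerivAt_rectifyingAxis s (hα s) (hT s) (hB s) (hF1 s) (hF3 s) (hratio s)
  exact is_const_of_deriv_eq_zero (fun s => (hP s).differentiableAt) (fun s => (hP s).deriv) s 0

lemma mdot_rectifyingAxis_normal (s : ℝ)
    (hαN : mdot (α s) (N s) = 0) (hTN : mdot (deriv α s) (N s) = 0)
    (hNB : mdot (N s) (B s) = 0) :
    mdot (rectifyingAxis μ₁ μ₂ α B s) (N s) = 0 := by
  rw [rectifyingAxis, mdot_linearCombination_left, hαN, hTN, mdot_comm, hNB]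
  ring

lemma mdot_rectifyingAxis_self (s : ℝ)
    (hα1 : mdot (α s) (α s) = 1) (hT1 : mdot (deriv α s) (deriv α s) = -1)
    (hB1 : mdot (B s) (B s) = 1) (hαT : mdot (α s) (deriv α s) = 0)
    (hαB : mdot (α s) (B s) = 0) (hTB : mdot (deriv α s) (B s) = 0) :
    mdot (rectifyingAxis μ₁ μ₂ α B s) (rectifyingAxis μ₁ μ₂ α B s) = 1 + μ₁ ^ 2 - μ₂ ^ 2 := by
  rw [rectifyingAxis, mdot_linearCombination_self, hα1, hT1, hB1, hαT, hαB, hTB]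
  linear_combination (μ₁ ^ 2 - μ₂ ^ 2) * cosh_sq_sub_sinh_sq s

end RectifyingAxis

theorem timelike_rectifying_of_ratio_general
    (α N B : ℝ → Fin 4 → ℝ) (κg τg : ℝ → ℝ)
    (hαsm : ContDiff ℝ (⊤ : ℕ∞) α)
    (hBsm : ContDiff ℝ (⊤ : ℕ∞) B)
    (hα1 : ∀ s, mdot (α s) (α s) = 1)
    (hT1 : ∀ s, mdot (deriv α s) (deriv α s) = -1)
    (hB1 : ∀ s, mdot (B s) (B s) = 1)
    (hαT : ∀ s, mdot (α s) (deriv α s) = 0)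
    (hαN : ∀ s, mdot (α s) (N s) = 0)
    (hαB : ∀ s, mdot (α s) (B s) = 0)
    (hTN : ∀ s, mdot (deriv α s) (N s) = 0)
    (hTB : ∀ s, mdot (deriv α s) (B s) = 0)
    (hNB : ∀ s, mdot (N s) (B s) = 0)
    (hF1 : ∀ s, deriv (deriv α) s = α s + κg s • N s)
    (hF3 : ∀ s, deriv B s = -τg s • N s)
    (μ₁ μ₂ : ℝ) (hμ : μ₂ ^ 2 - μ₁ ^ 2 < 1)
    (hratio : ∀ s, τg s = (μ₁ * Real.sinh s + μ₂ * Real.cosh s) * κg s) :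
    ∃ p : Fin 4 → ℝ, mdot p p = 1 ∧ ∀ s, mdot p (N s) = 0 := by
  set P := rectifyingAxis μ₁ μ₂ α B 0
  have hT : Differentiable ℝ (deriv α) :=
    (contDiff_infty_iff_deriv.mp hαsm).2.differentiable (by simp)
  have hPconst : ∀ s, rectifyingAxis μ₁ μ₂ α B s = P :=
    rectifyingAxis_eq_rectifyingAxis_zero (hαsm.differentiable (by simp)) hT
      (hBsm.differentiable (by simp)) hF1 hF3 hratio
  have hPP : mdot P P = 1 + μ₁ ^ 2 - μ₂ ^ 2 :=
    mdot_rectifyingAxis_self 0 (hα1 0) (hT1 0) (hB1 0) (hαT 0) (hαB 0) (hTB 0)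
  have hPN : ∀ s, mdot P (N s) = 0 := fun s =>
    hPconst s ▸ mdot_rectifyingAxis_normal s (hαN s) (hTN s) (hNB s)
  have hpos : 0 < 1 + μ₁ ^ 2 - μ₂ ^ 2 := by linarith
  refine ⟨(√(1 + μ₁ ^ 2 - μ₂ ^ 2))⁻¹ • P, ?_, fun s => ?_⟩
  · rw [mdot_smul_smul, hPP, inv_pow, sq_sqrt hpos.le, inv_mul_cancel₀ hpos.ne']
  · rw [mdot_smul_left, hPN, mul_zero]

/-- A timelike unit speed non-geodesic curve in `S³₁` whose curvature ratio satisfies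
`τ_g = (μ₁ sinh s + μ₂ cosh s) κ_g` with `μ₂² - μ₁² < 1` is a timelike rectifying curve
with respect to some point `p ∈ S³₁`. -/
theorem timelike_rectifying_of_ratio
    (α N B : ℝ → Fin 4 → ℝ) (κg τg : ℝ → ℝ)
    (hαsm : ContDiff ℝ (⊤ : ℕ∞) α) (hNsm : ContDiff ℝ (⊤ : ℕ∞) N)
    (hBsm : ContDiff ℝ (⊤ : ℕ∞) B)
    (hκsm : ContDiff ℝ (⊤ : ℕ∞) κg) (hτsm : ContDiff ℝ (⊤ : ℕ∞) τg)
    (hκpos : ∀ s, 0 < κg s)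
    (hα1 : ∀ s, mdot (α s) (α s) = 1)
    (hT1 : ∀ s, mdot (deriv α s) (deriv α s) = -1)
    (hN1 : ∀ s, mdot (N s) (N s) = 1)
    (hB1 : ∀ s, mdot (B s) (B s) = 1)
    (hαT : ∀ s, mdot (α s) (deriv α s) = 0)
    (hαN : ∀ s, mdot (α s) (N s) = 0)
    (hαB : ∀ s, mdot (α s) (B s) = 0)
    (hTN : ∀ s, mdot (deriv α s) (N s) = 0)
    (hTB : ∀ s, mdot (deriv α s) (B s) = 0)
    (hNB : ∀ s, mdot (N s) (B s) = 0)
    (hF1 : ∀ s, deriv (deriv α) s = α s + κg s • N s)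
    (hF2 : ∀ s, deriv N s = κg s • deriv α s + τg s • B s)
    (hF3 : ∀ s, deriv B s = -τg s • N s)
    (μ₁ μ₂ : ℝ) (hμ : μ₂ ^ 2 - μ₁ ^ 2 < 1)
    (hratio : ∀ s, τg s = (μ₁ * Real.sinh s + μ₂ * Real.cosh s) * κg s) :
    ∃ p : Fin 4 → ℝ, mdot p p = 1 ∧ ∀ s, mdot p (N s) = 0 :=
  timelike_rectifying_of_ratio_general α N B κg τg hαsm hBsm hα1 hT1 hB1 hαT hαN hαB hTN hTB hNB hF1
    hF3 μ₁ μ₂ hμ hratio
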